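/- Let 𝒢 be an e-graph, G its converted circuit, and α a minimal satisfying evaluation of G. Then for every e-node u ∈ N, α(x_u) = α(∧_u); and for every e-class C ∈ 𝒞, α(∨_C) = 1 if and only if there exists u ∈ C with α(∧_u) = 1. In particular, α is entirely determined by its values on the vertices ∧_u. -/
import Mathlib


/-- Gate types for a monotone circuit. -/
inductive Gate where
  | AND : Gate
  | OR : Gate
deriving DecidableEq

/-- A weighted cyclic monotone circuit: a directed graph with a set of outputs,
a gate-type function, and a cost function (costs are only meaningful on inputs). -/
structure Circuit (V : Type) where
  edge : V → V → Prop
  isOut : V → Prop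
  gate : V → Gate
  cost : V → ℝ

namespace Circuit

variable {V : Type}

/-- The inputs are the vertices of in-degree 0. -/
def IsInput (G : Circuit V) (u : V) : Prop := ∀ v, ¬ G.edge v u

/-- A valid evaluation: each non-input gate evaluates to its gate function applied to
the values of its in-neighbors. -/
def Valid (G : Circuit V) (α : V → Bool) : Prop :=
  ∀ u : V, ¬ G.IsInput u →
    (α u = true ↔
      match G.gate u with
      | Gate.AND => ∀ v, G.edge v u → α v = true
      | Gate.OR => ∃ v, G.edge v u ∧ α v = true)

/-- An evaluation satisfies the circuit if it is 1 on all outputs. -/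
def Satisfies (G : Circuit V) (α : V → Bool) : Prop :=
  ∀ u, G.isOut u → α u = true

/-- The restriction `α|_A`: equal to `α` on `A` and `0` (false) elsewhere. -/
noncomputable def restrict (α : V → Bool) (A : Set V) : V → Bool :=
  fun u => @ite _ (u ∈ A) (Classical.propDecidable _) (α u) false

/-- A minimal satisfying evaluation: valid, satisfying, and no restriction of its
true set to a proper subset is a valid satisfying evaluation. -/
def MinSat (G : Circuit V) (α : V → Bool) : Prop :=
  G.Valid α ∧ G.Satisfies α ∧
    ∀ A : Set V, A ⊂ {u | α u = true} →
      ¬ (G.Valid (restrict α A) ∧ G.Satisfies (restrict α A))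

/-- `α` is acyclic if the subgraph `G[α]` induced by the true vertices has no
directed cycle. -/
def EvalAcyclic (G : Circuit V) (α : V → Bool) : Prop :=
  ∀ u, ¬ Relation.TransGen (fun a b => G.edge a b ∧ α a = true ∧ α b = true) u u

end Circuit

/-- An e-graph: a finite set `N` of e-nodes partitioned into e-classes (indexed by the
type `C`, via the surjective class map `cls`), a dependency relation `edge ⊆ N × C`,
a set of output classes, and a cost function. -/
structure EGraph (N C : Type) where
  cls : N → C
  surj : Function.Surjective cls
  edge : N → C → Prop
  isOut : C → Prop
  cost : N → ℝ

namespace EGraph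

variable {N C : Type}

/-- An extraction, modeled as a partial function `C → Option N`: a choice function
(on its domain) closed under dependencies. -/
def IsExtraction (𝒢 : EGraph N C) (φ : C → Option N) : Prop :=
  (∀ D u, φ D = some u → 𝒢.cls u = D) ∧
  (∀ D u D', φ D = some u → 𝒢.edge u D' → (φ D').isSome)

/-- A satisfying extraction: an extraction whose domain contains all output classes. -/
def SatExtraction (𝒢 : EGraph N C) (φ : C → Option N) : Prop :=
  𝒢.IsExtraction φ ∧ ∀ D, 𝒢.isOut D → (φ D).isSome

/-- The restriction `φ|_𝒜` of an extraction to a set of classes. -/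
noncomputable def restrictExt (φ : C → Option N) (𝒜 : Set C) : C → Option N :=
  fun D => @ite _ (D ∈ 𝒜) (Classical.propDecidable _) (φ D) none

/-- A minimally satisfying extraction: satisfying, and no restriction to a proper
subset of its domain is a satisfying extraction. -/
def MinSatExtraction (𝒢 : EGraph N C) (φ : C → Option N) : Prop :=
  𝒢.SatExtraction φ ∧
    ∀ 𝒜 : Set C, 𝒜 ⊂ {D | (φ D).isSome = true} →
      ¬ 𝒢.SatExtraction (restrictExt φ 𝒜)

/-- An extraction is acyclic if there is no (nontrivial) selected path from a class
to itself. -/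
def ExtAcyclic (𝒢 : EGraph N C) (φ : C → Option N) : Prop :=
  ∀ D, ¬ Relation.TransGen (fun D₁ D₂ => ∃ u, φ D₁ = some u ∧ 𝒢.edge u D₂) D D

/-- Vertices of the converted circuit: an input `x_u` and an AND gate `∧_u` for each
e-node `u`, and an OR gate `∨_D` for each e-class `D`. -/
inductive Vtx (N C : Type) where
  | x : N → Vtx N C
  | and : N → Vtx N C
  | or : C → Vtx N C

/-- The converted circuit of an e-graph: edges `(∧_u, ∨_D)` for `u ∈ D`,
`(∨_D, ∧_u)` for `(u, D) ∈ ℰ`, and `(x_u, ∧_u)`; outputs `∨_D` for output classes `D`;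
gate types AND on `∧_u`, OR on `∨_D`; cost `c(x_u) = c(u)`. -/
def conv (𝒢 : EGraph N C) : Circuit (Vtx N C) where
  edge a b :=
    match a, b with
    | .and u, .or D => 𝒢.cls u = D
    | .or D, .and u => 𝒢.edge u D
    | .x u, .and v => u = v
    | _, _ => False
  isOut a :=
    match a with
    | .or D => 𝒢.isOut D
    | _ => False
  gate a :=
    match a with
    | .or _ => Gate.OR
    | _ => Gate.AND
  cost a :=
    match a with
    | .x u => 𝒢.cost u
    | _ => 0

/-- The evaluation `α_φ` associated to an extraction `φ`:
`α_φ(x_u) = α_φ(∧_u) = 1` iff `φ(cls u) = u`, and `α_φ(∨_D) = 1` iff `D ∈ dom φ`. -/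
noncomputable def evalOf (𝒢 : EGraph N C) (φ : C → Option N) : Vtx N C → Bool :=
  fun a =>
    match a with
    | .x u => @decide (φ (𝒢.cls u) = some u) (Classical.propDecidable _)
    | .and u => @decide (φ (𝒢.cls u) = some u) (Classical.propDecidable _)
    | .or D => (φ D).isSome

/-- The extraction `φ_α` associated to an evaluation `α`:
`D ∈ dom φ_α` and `φ_α(D) = u` iff `u ∈ D` and `α(∧_u) = 1`. -/
noncomputable def extOf (𝒢 : EGraph N C) (α : Vtx N C → Bool) : C → Option N :=
  fun D =>
    @dite _ (∃ u, 𝒢.cls u = D ∧ α (Vtx.and u) = true) (Classical.propDecidable _)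
      (fun h => some h.choose) (fun _ => none)

end EGraph

theorem stmt5_key {N C : Type} (𝒢 : EGraph N C)
    (α : EGraph.Vtx N C → Bool) (hα : (𝒢.conv).MinSat α) :
    (∀ u : N, α (EGraph.Vtx.x u) = α (EGraph.Vtx.and u)) ∧
    (∀ D : C, α (EGraph.Vtx.or D) = true ↔
      ∃ u : N, 𝒢.cls u = D ∧ α (EGraph.Vtx.and u) = true) := by
  obtain ⟨hval, hsat, hmin⟩ := hα
  have hor : ∀ D : C, α (EGraph.Vtx.or D) = true ↔
      ∃ u : N, 𝒢.cls u = D ∧ α (EGraph.Vtx.and u) = true := by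
    intro D
    obtain ⟨u0, hu0⟩ := 𝒢.surj D
    have hni : ¬ (𝒢.conv).IsInput (EGraph.Vtx.or D) := by
      intro h; exact h (EGraph.Vtx.and u0) hu0
    have hv := hval _ hni
    simp only [EGraph.conv] at hv
    rw [hv]
    constructor
    · rintro ⟨v, hvD, hαv⟩
      cases v with
      | and w => exact ⟨w, hvD, hαv⟩
      | x w => exact absurd hvD (by simp)
      | or E => exact absurd hvD (by simp)
    · rintro ⟨w, hw, hαw⟩
      exact ⟨EGraph.Vtx.and w, hw, hαw⟩
  refine ⟨?_, hor⟩
  intro u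
  have hni : ¬ (𝒢.conv).IsInput (EGraph.Vtx.and u) := by
    intro h; exact h (EGraph.Vtx.x u) rfl
  have hv := hval _ hni
  simp only [EGraph.conv] at hv
  cases hA : α (EGraph.Vtx.and u) with
  | true => exact hv.mp hA (EGraph.Vtx.x u) rfl
  | false =>
    by_contra hx
    have hx' : α (EGraph.Vtx.x u) = true := by
      cases h : α (EGraph.Vtx.x u) with
      | true => rfl
      | false => exact absurd (h.trans rfl) hx
    set A : Set (EGraph.Vtx N C) := {v | α v = true} \ {EGraph.Vtx.x u} with hA_def
    have hβ1 : Circuit.restrict α A (EGraph.Vtx.x u) = false := by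
      have hnot : EGraph.Vtx.x u ∉ A := fun h => h.2 rfl
      simp [Circuit.restrict, hnot]
    have hβ2 : ∀ v, v ≠ EGraph.Vtx.x u → Circuit.restrict α A v = α v := by
      intro v hvu
      by_cases ha : α v = true
      · have hmem : v ∈ A := ⟨ha, hvu⟩
        simp [Circuit.restrict, hmem]
      · have hnot : v ∉ A := fun h => ha h.1
        simp only [Bool.not_eq_true] at ha
        simp [Circuit.restrict, hnot, ha]
    have hss : A ⊂ {v | α v = true} := by
      constructor
      · intro v hv; exact hv.1
      · intro h
        exact absurd (h hx').2 (by simp)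
    apply hmin A hss
    constructor
    · -- Valid
      intro w hw
      cases w with
      | x v => exact absurd (fun z hz => by cases z <;> exact hz) hw
      | or D =>
        have h1 : Circuit.restrict α A (EGraph.Vtx.or D) = α (EGraph.Vtx.or D) :=
          hβ2 _ (by intro h; cases h)
        obtain ⟨u0, hu0⟩ := 𝒢.surj D
        have hni' : ¬ (𝒢.conv).IsInput (EGraph.Vtx.or D) := by
          intro h; exact h (EGraph.Vtx.and u0) hu0
        have hvD := hval _ hni'
        simp only [EGraph.conv] at hvD
        simp only [EGraph.conv]
        rw [h1, hvD]
        constructor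
        · rintro ⟨z, hz, haz⟩
          refine ⟨z, hz, ?_⟩
          cases z with
          | and w => rw [hβ2 _ (by intro h; cases h)]; exact haz
          | x w => exact absurd hz (by simp)
          | or E => exact absurd hz (by simp)
        · rintro ⟨z, hz, haz⟩
          refine ⟨z, hz, ?_⟩
          cases z with
          | and w => rw [hβ2 _ (by intro h; cases h)] at haz; exact haz
          | x w => exact absurd hz (by simp)
          | or E => exact absurd hz (by simp)
      | and v =>
        by_cases hvu : v = u
        · subst hvu
          have h1 : Circuit.restrict α A (EGraph.Vtx.and v) = false := by
            rw [hβ2 _ (by intro h; cases h)]; exact hA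
          simp only [EGraph.conv]
          rw [h1]
          constructor
          · intro h; exact absurd h (by simp)
          · intro h
            have := h (EGraph.Vtx.x v) rfl
            rw [hβ1] at this
            exact absurd this (by simp)
        · have h1 : Circuit.restrict α A (EGraph.Vtx.and v) = α (EGraph.Vtx.and v) :=
            hβ2 _ (by intro h; cases h)
          have hni' : ¬ (𝒢.conv).IsInput (EGraph.Vtx.and v) := by
            intro h; exact h (EGraph.Vtx.x v) rfl
          have hvv := hval _ hni'
          simp only [EGraph.conv] at hvv
          simp only [EGraph.conv]
          rw [h1, hvv]
          constructor
          · intro h z hz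
            cases z with
            | x w =>
              have hwv : w = v := hz
              subst hwv
              rw [hβ2 _ (by intro hh; apply hvu; injection hh)]
              exact h _ hz
            | or E =>
              rw [hβ2 _ (by intro hh; cases hh)]
              exact h _ hz
            | and w => exact absurd hz (by simp)
          · intro h z hz
            have hzz := h z hz
            cases z with
            | x w =>
              have hwv : w = v := hz
              subst hwv
              rwa [hβ2 _ (by intro hh; apply hvu; injection hh)] at hzz
            | or E =>
              rwa [hβ2 _ (by intro hh; cases hh)] at hzz
            | and w => exact absurd hz (by simp)
    · -- Satisfies
      intro w hw
      cases w with
      | x v => exact absurd hw (by simp [EGraph.conv])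
      | and v => exact absurd hw (by simp [EGraph.conv])
      | or D =>
        rw [hβ2 _ (by intro h; cases h)]
        exact hsat _ hw

/-- in a minimal satisfying evaluation of the converted circuit,
`α(x_u) = α(∧_u)` for every e-node `u`, and `α(∨_D) = 1` iff some `u ∈ D` has
`α(∧_u) = 1`; in particular `α` is entirely determined by its values on the `∧_u`. -/
theorem stmt5 {N C : Type} [Fintype N] [Fintype C] (𝒢 : EGraph N C)
    (α : EGraph.Vtx N C → Bool) (hα : (𝒢.conv).MinSat α) :
    (∀ u : N, α (EGraph.Vtx.x u) = α (EGraph.Vtx.and u)) ∧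
    (∀ D : C, α (EGraph.Vtx.or D) = true ↔
      ∃ u : N, 𝒢.cls u = D ∧ α (EGraph.Vtx.and u) = true) ∧
    (∀ β : EGraph.Vtx N C → Bool, (𝒢.conv).MinSat β →
      (∀ u : N, β (EGraph.Vtx.and u) = α (EGraph.Vtx.and u)) → β = α) := by
  obtain ⟨h1, h2⟩ := stmt5_key 𝒢 α hα
  refine ⟨h1, h2, ?_⟩
  intro β hβ hand
  obtain ⟨h1', h2'⟩ := stmt5_key 𝒢 β hβ
  funext v
  cases v with
  | x u => rw [h1', h1, hand]
  | and u => exact hand u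
  | or D =>
    have hiff : (β (EGraph.Vtx.or D) = true) ↔ (α (EGraph.Vtx.or D) = true) := by
      rw [h2', h2]
      constructor
      · rintro ⟨u, hu, hau⟩; exact ⟨u, hu, (hand u) ▸ hau⟩
      · rintro ⟨u, hu, hau⟩; exact ⟨u, hu, (hand u).symm ▸ hau⟩
    cases ha : α (EGraph.Vtx.or D) with
    | true => exact hiff.mpr ha
    | false =>
      cases hb : β (EGraph.Vtx.or D) with
      | true => exact absurd (ha ▸ hiff.mp hb) (by simp)
      | false => rfl
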